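/- The canonical frame of L = LIK X is forward confluent: for all prime theories Γ, Δ, Λ, if Γ ⊆ Δ and R_L Γ Λ, then there exists a prime theory Θ with R_L Δ Θ and Λ ⊆ Θ. -/
import Mathlib


/-- Formulas of intuitionistic modal logic. -/
inductive Formula : Type where
  | atom : ℕ → Formula
  | top  : Formula
  | bot  : Formula
  | and  : Formula → Formula → Formula
  | or   : Formula → Formula → Formula
  | imp  : Formula → Formula → Formula
  | box  : Formula → Formula
  | dia  : Formula → Formula
deriving DecidableEq


/-- The three optional extension axioms D, T, 4. -/
inductive ModAx : Type where
  | D : ModAx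
  | T : ModAx
  | Four : ModAx
deriving DecidableEq

/-- The Hilbert system LIK X: a complete Hilbert base for intuitionistic
propositional logic (as axiom schemata, hence all substitution instances of
IPL theorems are derivable), the modal axioms K□, K◇, N, DP, RV, the
extension axioms D, T, 4 according to membership in `X`, with rules
modus ponens and necessitation. -/
inductive LIK (X : Set ModAx) : Formula → Prop where
  | a1 (A B : Formula) : LIK X (A.imp (B.imp A))
  | a2 (A B C : Formula) : LIK X ((A.imp (B.imp C)).imp ((A.imp B).imp (A.imp C)))
  | a3 (A B : Formula) : LIK X ((A.and B).imp A)
  | a4 (A B : Formula) : LIK X ((A.and B).imp B)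
  | a5 (A B : Formula) : LIK X (A.imp (B.imp (A.and B)))
  | a6 (A B : Formula) : LIK X (A.imp (A.or B))
  | a7 (A B : Formula) : LIK X (B.imp (A.or B))
  | a8 (A B C : Formula) : LIK X ((A.imp C).imp ((B.imp C).imp ((A.or B).imp C)))
  | exfalso (A : Formula) : LIK X (Formula.bot.imp A)
  | truth : LIK X Formula.top
  | kbox (A B : Formula) :
      LIK X ((Formula.box (A.imp B)).imp ((Formula.box A).imp (Formula.box B)))
  | kdia (A B : Formula) :
      LIK X ((Formula.box (A.imp B)).imp ((Formula.dia A).imp (Formula.dia B)))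
  | nax : LIK X ((Formula.dia Formula.bot).imp Formula.bot)
  | dp (A B : Formula) :
      LIK X ((Formula.dia (A.or B)).imp ((Formula.dia A).or (Formula.dia B)))
  | rv (A B : Formula) :
      LIK X ((Formula.box (A.or B)).imp ((Formula.dia A).or (Formula.box B)))
  | dax : ModAx.D ∈ X → LIK X (Formula.dia Formula.top)
  | tax (A : Formula) : ModAx.T ∈ X →
      LIK X (((Formula.box A).imp A).and (A.imp (Formula.dia A)))
  | fourax (A : Formula) : ModAx.Four ∈ X →
      LIK X (((Formula.box A).imp (Formula.box (Formula.box A))).and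
        ((Formula.dia (Formula.dia A)).imp (Formula.dia A)))
  | mp (A B : Formula) : LIK X (A.imp B) → LIK X A → LIK X B
  | nec (A : Formula) : LIK X A → LIK X (Formula.box A)

/-- A theory for L = LIK X: contains all L-derivable formulas and is closed
under modus ponens. -/
def IsTheory (X : Set ModAx) (Γ : Set Formula) : Prop :=
  (∀ A, LIK X A → A ∈ Γ) ∧ ∀ A B, Formula.imp A B ∈ Γ → A ∈ Γ → B ∈ Γ

/-- A prime theory: a proper theory (⊥ ∉ Γ) deciding disjunctions. -/
def IsPrime (X : Set ModAx) (Γ : Set Formula) : Prop :=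
  IsTheory X Γ ∧ Formula.bot ∉ Γ ∧ ∀ A B, Formula.or A B ∈ Γ → A ∈ Γ ∨ B ∈ Γ

/-- The canonical accessibility relation:
`R_L Γ Δ` iff `□Γ ⊆ Δ` and `◇Δ ⊆ Γ`. -/
def CanR (Γ Δ : Set Formula) : Prop :=
  (∀ A, Formula.box A ∈ Γ → A ∈ Δ) ∧ (∀ A, A ∈ Δ → Formula.dia A ∈ Γ)

namespace FwdConf

open Formula

variable {X : Set ModAx}

/-- identity -/
lemma impId (A : Formula) : LIK X (A.imp A) :=
  LIK.mp _ _ (LIK.mp _ _ (LIK.a2 A (A.imp A) A) (LIK.a1 A (A.imp A))) (LIK.a1 A A)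

lemma syl {A B C : Formula} (h1 : LIK X (A.imp B)) (h2 : LIK X (B.imp C)) :
    LIK X (A.imp C) :=
  LIK.mp _ _ (LIK.mp _ _ (LIK.a2 A B C) (LIK.mp _ _ (LIK.a1 (B.imp C) A) h2)) h1

lemma ap {A B C : Formula} (h1 : LIK X (A.imp (B.imp C))) (h2 : LIK X (A.imp B)) :
    LIK X (A.imp C) :=
  LIK.mp _ _ (LIK.mp _ _ (LIK.a2 A B C) h1) h2

lemma precomp {Q C Z : Formula} (hqc : LIK X (Q.imp C)) :
    LIK X ((C.imp Z).imp (Q.imp Z)) :=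
  ap (syl (LIK.a1 (C.imp Z) Q) (LIK.a2 Q C Z)) (LIK.mp _ _ (LIK.a1 (Q.imp C) (C.imp Z)) hqc)

lemma postcomp {A B C : Formula} (hbc : LIK X (B.imp C)) :
    LIK X ((A.imp B).imp (A.imp C)) :=
  LIK.mp _ _ (LIK.a2 A B C) (LIK.mp _ _ (LIK.a1 (B.imp C) A) hbc)

lemma combine {B₁ B₂ C₁ C₂ A A' : Formula}
    (h1 : LIK X (B₁.imp (C₁.imp (A.imp A'))))
    (h2 : LIK X (B₂.imp (C₂.imp A))) :
    LIK X ((B₁.and B₂).imp ((C₁.and C₂).imp A')) := by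
  have s2 : LIK X ((B₁.and B₂).imp ((C₁.and C₂).imp (A.imp A'))) :=
    syl (syl (LIK.a3 B₁ B₂) h1) (precomp (LIK.a3 C₁ C₂))
  have t2 : LIK X ((B₁.and B₂).imp ((C₁.and C₂).imp A)) :=
    syl (syl (LIK.a4 B₁ B₂) h2) (precomp (LIK.a4 C₁ C₂))
  exact ap (syl s2 (LIK.a2 (C₁.and C₂) A A')) t2

/-- closure of a set under theorems and modus ponens -/
inductive Cl (X : Set ModAx) (S : Set Formula) : Formula → Prop
  | base {A : Formula} : A ∈ S → Cl X S A
  | thm {A : Formula} : LIK X A → Cl X S A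
  | mp {A B : Formula} : Cl X S (A.imp B) → Cl X S A → Cl X S B

lemma cl_isTheory (S : Set Formula) : IsTheory X {A | Cl X S A} :=
  ⟨fun _ h => Cl.thm h, fun _ _ h1 h2 => Cl.mp h1 h2⟩

lemma key {Δ Λ : Set Formula} (hΔ : IsTheory X Δ) (hΛ : IsTheory X Λ)
    {A : Formula}
    (h : Cl X (Λ ∪ {B | Formula.box B ∈ Δ}) A) :
    ∃ B C, Formula.box B ∈ Δ ∧ C ∈ Λ ∧ LIK X (B.imp (C.imp A)) := by
  induction h with
  | @base A hA =>
    rcases hA with hA | hA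
    · exact ⟨Formula.top, A, hΔ.1 _ (LIK.nec _ LIK.truth), hA,
        LIK.mp _ _ (LIK.a1 (A.imp A) Formula.top) (impId A)⟩
    · exact ⟨A, Formula.top, hA, hΛ.1 _ LIK.truth, LIK.a1 A Formula.top⟩
  | @thm A hA =>
    exact ⟨Formula.top, Formula.top, hΔ.1 _ (LIK.nec _ LIK.truth), hΛ.1 _ LIK.truth,
      LIK.mp _ _ (LIK.a1 (Formula.top.imp A) Formula.top)
        (LIK.mp _ _ (LIK.a1 A Formula.top) hA)⟩
  | @mp A A' _ _ ih1 ih2 =>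
    obtain ⟨B₁, C₁, hB₁, hC₁, hd1⟩ := ih1
    obtain ⟨B₂, C₂, hB₂, hC₂, hd2⟩ := ih2
    refine ⟨B₁.and B₂, C₁.and C₂, ?_, ?_, combine hd1 hd2⟩
    · -- □(B₁ ∧ B₂) ∈ Δ
      have hthm : LIK X ((Formula.box B₁).imp ((Formula.box B₂).imp
          (Formula.box (B₁.and B₂)))) :=
        syl (LIK.mp _ _ (LIK.kbox B₁ (B₂.imp (B₁.and B₂))) (LIK.nec _ (LIK.a5 B₁ B₂)))
          (LIK.kbox B₂ (B₁.and B₂))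
      exact hΔ.2 _ _ (hΔ.2 _ _ (hΔ.1 _ hthm) hB₁) hB₂
    · exact hΛ.2 _ _ (hΛ.2 _ _ (hΛ.1 _ (LIK.a5 C₁ C₂)) hC₁) hC₂

lemma keyDia {Δ Λ : Set Formula} (hΔ : IsTheory X Δ) (hΛ : IsTheory X Λ)
    (hdia : ∀ C ∈ Λ, Formula.dia C ∈ Δ)
    {A : Formula} (h : Cl X (Λ ∪ {B | Formula.box B ∈ Δ}) A) :
    Formula.dia A ∈ Δ := by
  obtain ⟨B, C, hB, hC, hd⟩ := key hΔ hΛ h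
  have h1 : Formula.box (C.imp A) ∈ Δ :=
    hΔ.2 _ _ (hΔ.1 _ (LIK.mp _ _ (LIK.kbox B (C.imp A)) (LIK.nec _ hd))) hB
  have h2 : (Formula.dia C).imp (Formula.dia A) ∈ Δ :=
    hΔ.2 _ _ (hΔ.1 _ (LIK.kdia C A)) h1
  exact hΔ.2 _ _ h2 (hdia C hC)

/-- the theory generated by adding A to Θ -/
lemma theory_add {Θ : Set Formula} (hΘ : IsTheory X Θ) (A : Formula) :
    IsTheory X {C | A.imp C ∈ Θ} := by
  constructor
  · intro C hC
    exact hΘ.2 _ _ (hΘ.1 _ (LIK.a1 C A)) (hΘ.1 _ hC)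
  · intro C D h1 h2
    exact hΘ.2 _ _ (hΘ.2 _ _ (hΘ.1 _ (LIK.a2 A C D)) h1) h2

end FwdConf

/-- The canonical frame of L = LIK X is forward confluent. -/
theorem canonical_forward_confluent (X : Set ModAx)
    (Γ Δ Λ : Set Formula)
    (hΓ : IsPrime X Γ) (hΔ : IsPrime X Δ) (hΛ : IsPrime X Λ)
    (hsub : Γ ⊆ Δ) (hR : CanR Γ Λ) :
    ∃ Θ : Set Formula, IsPrime X Θ ∧ CanR Δ Θ ∧ Λ ⊆ Θ := by
  classical
  open FwdConf in
  obtain ⟨hΔth, hΔbot, hΔprime⟩ := hΔ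
  have hΛth : IsTheory X Λ := hΛ.1
  have hdia : ∀ C ∈ Λ, Formula.dia C ∈ Δ := fun C hC => hsub (hR.2 C hC)
  set S : Set Formula := Λ ∪ {B | Formula.box B ∈ Δ} with hS
  set T₀ : Set Formula := {A | FwdConf.Cl X S A} with hT₀
  -- the collection of theories extending T₀ whose ◇-image lies in Δ
  set 𝒮 : Set (Set Formula) :=
    {Θ | IsTheory X Θ ∧ (∀ A ∈ Θ, Formula.dia A ∈ Δ) ∧ T₀ ⊆ Θ} with h𝒮
  have hT₀mem : T₀ ∈ 𝒮 := by
    refine ⟨FwdConf.cl_isTheory S, ?_, le_refl _⟩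
    intro A hA
    exact FwdConf.keyDia hΔth hΛth hdia hA
  have hchains : ∀ c ⊆ 𝒮, IsChain (· ⊆ ·) c → c.Nonempty →
      ∃ ub ∈ 𝒮, ∀ s ∈ c, s ⊆ ub := by
    intro c hc𝒮 hchain ⟨Θ₀, hΘ₀⟩
    refine ⟨⋃₀ c, ⟨⟨?_, ?_⟩, ?_, ?_⟩, fun Θ' hΘ' => Set.subset_sUnion_of_mem hΘ'⟩
    · intro A hA
      exact ⟨Θ₀, hΘ₀, (hc𝒮 hΘ₀).1.1 _ hA⟩
    · rintro A B ⟨Θ₁, hΘ₁, hAB⟩ ⟨Θ₂, hΘ₂, hA⟩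
      rcases hchain.total hΘ₁ hΘ₂ with h | h
      · exact ⟨Θ₂, hΘ₂, (hc𝒮 hΘ₂).1.2 _ _ (h hAB) hA⟩
      · exact ⟨Θ₁, hΘ₁, (hc𝒮 hΘ₁).1.2 _ _ hAB (h hA)⟩
    · rintro A ⟨Θ₁, hΘ₁, hA⟩
      exact (hc𝒮 hΘ₁).2.1 _ hA
    · intro A hA
      exact ⟨Θ₀, hΘ₀, (hc𝒮 hΘ₀).2.2 hA⟩
  obtain ⟨Θ, hT₀Θ, hmax⟩ := zorn_subset_nonempty 𝒮 hchains T₀ hT₀mem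
  obtain ⟨hΘth, hΘdia, hΘT₀⟩ := hmax.prop
  have hbotΘ : Formula.bot ∉ Θ := by
    intro hb
    exact hΔbot (hΔth.2 _ _ (hΔth.1 _ LIK.nax) (hΘdia _ hb))
  have hΛΘ : Λ ⊆ Θ := fun C hC => hΘT₀ (FwdConf.Cl.base (Or.inl hC))
  refine ⟨Θ, ⟨hΘth, hbotΘ, ?_⟩, ⟨?_, hΘdia⟩, hΛΘ⟩
  · -- primeness
    intro A B hAB
    by_contra hcon
    push_neg at hcon
    obtain ⟨hA, hB⟩ := hcon
    -- adding A (resp. B) must break the ◇-condition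
    have step : ∀ D : Formula, D ∉ Θ →
        ∃ f, D.imp f ∈ Θ ∧ Formula.dia f ∉ Δ := by
      intro D hD
      by_contra hc
      push_neg at hc
      have hmem : {C | D.imp C ∈ Θ} ∈ 𝒮 := by
        refine ⟨FwdConf.theory_add hΘth D, ?_, ?_⟩
        · intro C hC; exact hc C hC
        · intro C hC
          exact hΘth.2 _ _ (hΘth.1 _ (LIK.a1 C D)) (hΘT₀ hC)
      have hsub' : Θ ⊆ {C | D.imp C ∈ Θ} := by
        intro C hC
        exact hΘth.2 _ _ (hΘth.1 _ (LIK.a1 C D)) hC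
      have hback : {C | D.imp C ∈ Θ} ⊆ Θ := hmax.2 hmem hsub'
      exact hD (hback (hΘth.1 _ (FwdConf.impId D)))
    obtain ⟨f₁, hf₁, hdf₁⟩ := step A hA
    obtain ⟨f₂, hf₂, hdf₂⟩ := step B hB
    have hA' : A.imp (f₁.or f₂) ∈ Θ :=
      hΘth.2 _ _ (hΘth.1 _ (FwdConf.postcomp (LIK.a6 f₁ f₂))) hf₁
    have hB' : B.imp (f₁.or f₂) ∈ Θ :=
      hΘth.2 _ _ (hΘth.1 _ (FwdConf.postcomp (LIK.a7 f₁ f₂))) hf₂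
    have hor : f₁.or f₂ ∈ Θ :=
      hΘth.2 _ _ (hΘth.2 _ _ (hΘth.2 _ _ (hΘth.1 _ (LIK.a8 A B (f₁.or f₂))) hA') hB') hAB
    have hd : Formula.dia (f₁.or f₂) ∈ Δ := hΘdia _ hor
    have : (Formula.dia f₁).or (Formula.dia f₂) ∈ Δ :=
      hΔth.2 _ _ (hΔth.1 _ (LIK.dp f₁ f₂)) hd
    rcases hΔprime _ _ this with h | h
    · exact hdf₁ h
    · exact hdf₂ h
  · -- □Δ ⊆ Θ
    intro A hA
    exact hΘT₀ (FwdConf.Cl.base (Or.inr hA))
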